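/- Fix λ ≥ 0. There exist constants β = β(λ) > 0, C = C(λ) > 0 and R > 0 such that for all r ≥ R and all a ∈ ℝ, the following two large deviation bounds hold: ∫_{[a,∞) ∩ B_{r,λ}(1/2)ᶜ} f_{r,λ}(x) dx ≤ C e^{−β r^{1/3}} and ∫_{ { y : y = δ_x for some x ∈ [a,∞) ∩ B_{r,λ}(1/2)ᶜ } } φ(y) dy ≤ C e^{−β r^{1/3}}, where φ is the standard normal density and B_{r,λ}(1/2)ᶜ denotes the complement in (0,∞) of the bulk B_{r,λ}(1/2). -/

import Mathlib

open Real MeasureTheory Set Filter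

/-- The noncentral chi-square density with `r` degrees of freedom and
noncentrality parameter `lam` (set to `0` for `x ≤ 0`). -/
noncomputable def chiSqPDF (r lam x : ℝ) : ℝ :=
  if 0 < x then
    (x / 2) ^ (r / 2 - 1) / (2 * Real.exp ((x + lam) / 2)) *
      ∑' j : ℕ, (lam * x / 4) ^ j / ((j.factorial : ℝ) * Real.Gamma (r / 2 + (j : ℝ)))
  else 0

/-- `δ_x = (x − (r+λ)) / √(2(r+2λ))`. -/
noncomputable def stdDelta (r lam x : ℝ) : ℝ :=
  (x - (r + lam)) / Real.sqrt (2 * (r + 2 * lam))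

/-- The standard normal density. -/
noncomputable def stdPhi (z : ℝ) : ℝ :=
  Real.exp (-z ^ 2 / 2) / Real.sqrt (2 * Real.pi)

/-- The standard normal survival function. -/
noncomputable def stdPsi (z : ℝ) : ℝ := ∫ y in Set.Ioi z, stdPhi y

/-- The survival function of the noncentral chi-square distribution. -/
noncomputable def chiSqSurv (r lam a : ℝ) : ℝ := ∫ x in Set.Ioi a, chiSqPDF r lam x

/-- `D_{r,λ} = (r+λ)/√(2(r+2λ))`. -/
noncomputable def Drl (r lam : ℝ) : ℝ := (r + lam) / Real.sqrt (2 * (r + 2 * lam))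

/-- The bulk `B_{r,λ}(η)` of the noncentral chi-square distribution. -/
noncomputable def bulk (r lam eta : ℝ) : Set ℝ :=
  {x : ℝ | 0 < x ∧ |stdDelta r lam x / Drl r lam| ≤ eta * r ^ (-(1:ℝ)/3)}

/-!
Outside the bulk, `x` lies at relative distance more than `ε = η r^{-1/3}` from the mean
`r + λ`. Since `Γ(s + j) ≥ Γ(s) sʲ`, the Bessel-type series is at most an exponential, so the
noncentral density is dominated by the Gamma kernel `x^{r/2-1} e^{-(1-λ/r)x/2}`. Its two tails
beyond `(r + λ)(1 ± ε)` are bounded by exponential tilting with parameter `±ε/4`, and the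
estimate `-log(1 - x) ≤ x + 4x²/3` turns each into `e^{λ - ε²r/12}`. On the Gaussian side,
`δ_x = (δ_x / D_{r,λ}) D_{r,λ}` with `D_{r,λ}² ≥ r/4`, so the image lies where
`|y| ≥ ε √r / 2`. For `η = 1/2`, `ε² r = r^{1/3}/4`.
-/

lemma Gamma_mul_pow_le_Gamma_add_nat {s : ℝ} (hs : 0 < s) (j : ℕ) :
    Gamma s * s ^ j ≤ Gamma (s + j) := by
  induction j with
  | zero => simp
  | succ j ih =>
    have hsj : 0 < s + j := by positivity
    rw [Nat.cast_succ, ← add_assoc, Gamma_add_one hsj.ne', pow_succ, ← mul_assoc]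
    calc Gamma s * s ^ j * s ≤ Gamma (s + j) * (s + j) := by
          gcongr
          · exact le_add_of_nonneg_right j.cast_nonneg
      _ = (s + j) * Gamma (s + j) := mul_comm _ _

lemma tsum_pow_div_factorial_mul_Gamma_le {s y : ℝ} (hs : 0 < s) (hy : 0 ≤ y) :
    ∑' j : ℕ, y ^ j / ((j.factorial : ℝ) * Gamma (s + j)) ≤ exp (y / s) / Gamma s := by
  have hexp :
      HasSum (fun j : ℕ => (y / s) ^ j / j.factorial / Gamma s) (exp (y / s) / Gamma s) := by
    rw [exp_eq_exp_ℝ]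
    exact (NormedSpace.expSeries_div_hasSum_exp (y / s)).div_const _
  have hle : ∀ j : ℕ,
      y ^ j / ((j.factorial : ℝ) * Gamma (s + j)) ≤ (y / s) ^ j / j.factorial / Gamma s := by
    intro j
    calc y ^ j / ((j.factorial : ℝ) * Gamma (s + j))
        ≤ y ^ j / (j.factorial * (Gamma s * s ^ j)) := by
          gcongr
          exact Gamma_mul_pow_le_Gamma_add_nat hs j
      _ = (y / s) ^ j / j.factorial / Gamma s := by
          rw [div_pow]
          field_simp
  have hnonneg : ∀ j : ℕ, 0 ≤ y ^ j / ((j.factorial : ℝ) * Gamma (s + j)) := fun j => by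
    have : 0 < Gamma (s + j) := Gamma_pos_of_pos (by positivity)
    positivity
  exact hasSum_le hle (Summable.of_nonneg_of_le hnonneg hle hexp.summable).hasSum hexp

lemma chiSqPDF_nonneg {r lam : ℝ} (hr : 0 < r) (hlam : 0 ≤ lam) (x : ℝ) :
    0 ≤ chiSqPDF r lam x := by
  unfold chiSqPDF
  split_ifs with hx
  · refine mul_nonneg (by positivity) (tsum_nonneg fun j => ?_)
    have : 0 < Gamma (r / 2 + j) := Gamma_pos_of_pos (by positivity)
    positivity
  · exact le_rfl

lemma chiSqPDF_le {r lam x : ℝ} (hr : 0 < r) (hlam : 0 ≤ lam) (hx : 0 < x) :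
    chiSqPDF r lam x ≤ exp (-(lam / 2)) / (2 ^ (r / 2) * Gamma (r / 2)) *
      (x ^ (r / 2 - 1) * exp (-((1 - lam / r) / 2 * x))) := by
  rw [chiSqPDF, if_pos hx]
  calc _ ≤ (x / 2) ^ (r / 2 - 1) / (2 * exp ((x + lam) / 2)) *
        (exp (lam * x / 4 / (r / 2)) / Gamma (r / 2)) := by
        gcongr
        exact tsum_pow_div_factorial_mul_Gamma_le (by positivity) (by positivity)
    _ = _ := by
        have hexp : exp (lam * x / 4 / (r / 2)) =
            exp (-(lam / 2)) * exp (-((1 - lam / r) / 2 * x)) * exp ((x + lam) / 2) := by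
          rw [← exp_add, ← exp_add]; congr 1; field_simp; ring
        rw [div_rpow hx.le zero_le_two, rpow_sub_one two_ne_zero, hexp]
        field_simp

lemma integrableOn_rpow_mul_exp_neg_mul {s c : ℝ} (hs : 0 < s) (hc : 0 < c) :
    IntegrableOn (fun x : ℝ => x ^ (s - 1) * exp (-(c * x))) (Ioi 0) := by
  simpa using integrableOn_rpow_mul_exp_neg_mul_rpow (p := 1) (by linarith : -1 < s - 1) one_pos hc

/-- On `S` the kernel is dominated by the sum of its two tilts `e^{-τ b} x^{s-1} e^{-(c-τ)x}`,
`τ = τL` at `b = bL` and `τ = τR` at `b = bR`. -/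
lemma setIntegral_rpow_mul_exp_le_of_forall_le_or_le {s c τL τR bL bR : ℝ} (hs : 0 < s)
    (hτL : τL ≤ 0) (hτR : 0 ≤ τR) (hτRc : τR < c) {S : Set ℝ} (hS : MeasurableSet S)
    (hS0 : S ⊆ Ioi 0) (hSout : ∀ x ∈ S, x ≤ bL ∨ bR ≤ x) :
    ∫ x in S, x ^ (s - 1) * exp (-(c * x)) ≤
      Gamma s *
        (exp (-(τL * bL)) * (1 / (c - τL)) ^ s + exp (-(τR * bR)) * (1 / (c - τR)) ^ s) := by
  have hcL : 0 < c - τL := by linarith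
  have hcR : 0 < c - τR := by linarith
  set g : ℝ → ℝ := fun x => exp (-(τL * bL)) * (x ^ (s - 1) * exp (-((c - τL) * x))) +
    exp (-(τR * bR)) * (x ^ (s - 1) * exp (-((c - τR) * x)))
  have hg : IntegrableOn g (Ioi 0) :=
    ((integrableOn_rpow_mul_exp_neg_mul hs hcL).const_mul _).add
      ((integrableOn_rpow_mul_exp_neg_mul hs hcR).const_mul _)
  have hpoint : ∀ x ∈ S, x ^ (s - 1) * exp (-(c * x)) ≤ g x := by
    intro x hx
    have hx0 : 0 < x := hS0 hx
    have tilt : ∀ τ b, τ * b ≤ τ * x →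
        x ^ (s - 1) * exp (-(c * x)) ≤ exp (-(τ * b)) * (x ^ (s - 1) * exp (-((c - τ) * x))) := by
      intro τ b h
      rw [mul_left_comm, ← exp_add]
      gcongr
      linarith
    rcases hSout x hx with h | h
    · exact le_add_of_le_of_nonneg (tilt τL bL (mul_le_mul_of_nonpos_left h hτL)) (by positivity)
    · exact le_add_of_nonneg_of_le (by positivity) (tilt τR bR (mul_le_mul_of_nonneg_left h hτR))
  calc ∫ x in S, x ^ (s - 1) * exp (-(c * x))
      ≤ ∫ x in S, g x := setIntegral_mono_on
        (((integrableOn_rpow_mul_exp_neg_mul hs (hcR.trans_le (by linarith))).mono_set hS0))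
        (hg.mono_set hS0) hS hpoint
    _ ≤ ∫ x in Ioi 0, g x := setIntegral_mono_set hg
        ((ae_restrict_mem measurableSet_Ioi).mono fun x (hx : 0 < x) => by positivity)
        hS0.eventuallyLE
    _ = _ := by
        rw [integral_add ((integrableOn_rpow_mul_exp_neg_mul hs hcL).const_mul _)
            ((integrableOn_rpow_mul_exp_neg_mul hs hcR).const_mul _),
          integral_const_mul, integral_const_mul, integral_rpow_mul_exp_neg_mul_Ioi hs hcL,
          integral_rpow_mul_exp_neg_mul_Ioi hs hcR]
        ring

lemma neg_log_one_sub_le {x : ℝ} (hx : |x| ≤ 1 / 4) : -log (1 - x) ≤ x + 4 / 3 * x ^ 2 := by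
  have h := abs_log_sub_add_sum_range_le (hx.trans_lt (by norm_num)) 1
  norm_num at h
  have hsq : x ^ 2 / (1 - |x|) ≤ 4 / 3 * x ^ 2 := by
    rw [div_le_iff₀ (by linarith)]
    nlinarith [sq_nonneg x]
  linarith [neg_abs_le (x + log (1 - x))]

/-- A tilted term of `setIntegral_rpow_mul_exp_le_of_forall_le_or_le` for the kernel of
`chiSqPDF_le`, with tilt `τ` at the threshold `(r + λ)(1 + 4τ)`. -/
lemma chiSq_chernoff_term_le {r lam τ : ℝ} (hr : 0 < r) (hlam : 0 ≤ lam)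
    (hτ : lam / r + 2 * |τ| ≤ 1 / 4) :
    exp (-(lam / 2)) / (2 ^ (r / 2) * Gamma (r / 2)) * (Gamma (r / 2) *
      (exp (-(τ * ((r + lam) * (1 + 4 * τ)))) * (1 / ((1 - lam / r) / 2 - τ)) ^ (r / 2))) ≤
      exp (lam - 4 * τ ^ 2 * r / 3) := by
  set ρ := lam / r with hρ
  have hρ0 : 0 ≤ ρ := by positivity
  have hlamρ : lam = ρ * r := by rw [hρ]; field_simp
  have hx : |ρ + 2 * τ| ≤ 1 / 4 :=
    (abs_add_le _ _).trans (by rw [abs_mul, abs_two, abs_of_nonneg hρ0]; linarith)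
  have hpos : 0 < 1 - (ρ + 2 * τ) := by linarith [le_abs_self (ρ + 2 * τ)]
  have hlhs : exp (-(lam / 2)) / (2 ^ (r / 2) * Gamma (r / 2)) * (Gamma (r / 2) *
      (exp (-(τ * ((r + lam) * (1 + 4 * τ)))) * (1 / ((1 - ρ) / 2 - τ)) ^ (r / 2))) =
      exp (-(lam / 2) - τ * ((r + lam) * (1 + 4 * τ)) + r / 2 * -log (1 - (ρ + 2 * τ))) := by
    have h2 : 1 / ((1 - ρ) / 2 - τ) = 2 * (1 - (ρ + 2 * τ))⁻¹ := by
      rw [show (1 - ρ) / 2 - τ = (1 - (ρ + 2 * τ)) / 2 by ring, one_div_div, div_eq_mul_inv]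
    rw [h2, mul_rpow zero_le_two (by positivity), inv_rpow hpos.le, rpow_def_of_pos hpos,
      exp_add, exp_sub, mul_neg, exp_neg (r / 2 * _), exp_neg (τ * _), mul_comm (r / 2)]
    field_simp
  rw [hlhs, exp_le_exp]
  have hlog := mul_le_mul_of_nonneg_left (neg_log_one_sub_le hx) (by positivity : 0 ≤ r / 2)
  have habsτ : |τ| ≤ 1 / 8 := by linarith
  have hτ' := abs_le.1 habsτ
  rw [hlamρ]
  nlinarith [mul_nonneg (mul_nonneg hr.le hρ0)
    (by nlinarith : 0 ≤ 1 - 5 / 3 * τ + 4 * τ ^ 2 - 2 / 3 * ρ)]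

lemma setIntegral_chiSqPDF_le {r lam ε : ℝ} (hr : 0 < r) (hlam : 0 ≤ lam) (hε : 0 ≤ ε)
    (hsmall : lam / r + ε / 2 ≤ 1 / 4) {S : Set ℝ} (hS : MeasurableSet S) (hS0 : S ⊆ Ioi 0)
    (hSout : ∀ x ∈ S, ε * (r + lam) < |x - (r + lam)|) :
    ∫ x in S, chiSqPDF r lam x ≤ 2 * exp (lam - ε ^ 2 * r / 12) := by
  set K := exp (-(lam / 2)) / (2 ^ (r / 2) * Gamma (r / 2))
  set c := (1 - lam / r) / 2
  have hc : ε / 4 < c := by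
    have : 0 ≤ lam / r := by positivity
    simp only [c]
    linarith
  have hout : ∀ x ∈ S,
      x ≤ (r + lam) * (1 + 4 * (-(ε / 4))) ∨ (r + lam) * (1 + 4 * (ε / 4)) ≤ x := by
    intro x hx
    rcases lt_abs.1 (hSout x hx) with h | h
    · right; linarith
    · left; linarith
  have hterm : ∀ τ, |τ| = ε / 4 → K * (Gamma (r / 2) *
      (exp (-(τ * ((r + lam) * (1 + 4 * τ)))) * (1 / (c - τ)) ^ (r / 2))) ≤
      exp (lam - ε ^ 2 * r / 12) := by
    intro τ hτ
    convert chiSq_chernoff_term_le hr hlam (τ := τ) (by rw [hτ]; linarith) using 3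
    rw [← sq_abs τ, hτ]
    ring
  calc ∫ x in S, chiSqPDF r lam x
      ≤ ∫ x in S, K * (x ^ (r / 2 - 1) * exp (-(c * x))) :=
        integral_mono_of_nonneg (.of_forall (chiSqPDF_nonneg hr hlam))
          (((integrableOn_rpow_mul_exp_neg_mul (by positivity) (by linarith)).mono_set
            hS0).const_mul K)
          (ae_restrict_of_forall_mem hS fun x hx => chiSqPDF_le hr hlam (hS0 hx))
    _ = K * ∫ x in S, x ^ (r / 2 - 1) * exp (-(c * x)) := integral_const_mul K _
    _ ≤ K * (Gamma (r / 2) *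
          (exp (-(-(ε / 4) * ((r + lam) * (1 + 4 * (-(ε / 4)))))) *
              (1 / (c - -(ε / 4))) ^ (r / 2) +
           exp (-(ε / 4 * ((r + lam) * (1 + 4 * (ε / 4))))) * (1 / (c - ε / 4)) ^ (r / 2))) := by
        gcongr
        exact setIntegral_rpow_mul_exp_le_of_forall_le_or_le (by positivity)
          (by linarith) (by linarith) hc hS hS0 hout
    _ ≤ 2 * exp (lam - ε ^ 2 * r / 12) := by
        rw [mul_add, mul_add]
        linarith [hterm (-(ε / 4)) (by rw [abs_neg, abs_of_nonneg (by positivity)]),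
          hterm (ε / 4) (abs_of_nonneg (by positivity))]

lemma setIntegral_stdPhi_le {z : ℝ} {S : Set ℝ} (hS : S ⊆ {y | z ^ 2 ≤ y ^ 2}) :
    ∫ y in S, stdPhi y ≤ 2 * exp (-(z ^ 2 / 3)) := by
  have hgauss : ∀ b : ℝ, 0 < b → Integrable fun y : ℝ => exp (-b * y ^ 2) :=
    fun b hb => integrable_exp_neg_mul_sq hb
  have hphi : Integrable stdPhi := by
    refine ((hgauss (1 / 2) one_half_pos).div_const (sqrt (2 * π))).congr (.of_forall fun y => ?_)
    simp only [stdPhi]; ring_nf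
  set g : ℝ → ℝ := fun y => exp (-(z ^ 2 / 3)) * exp (-(1 / 6) * y ^ 2) / sqrt (2 * π)
  have hg : Integrable g := ((hgauss (1 / 6) (by norm_num)).const_mul _).div_const _
  have hT : MeasurableSet {y : ℝ | z ^ 2 ≤ y ^ 2} := measurableSet_le measurable_const (by fun_prop)
  calc ∫ y in S, stdPhi y
      ≤ ∫ y in {y | z ^ 2 ≤ y ^ 2}, stdPhi y := setIntegral_mono_set hphi.integrableOn
        (.of_forall fun y => by unfold stdPhi; positivity) hS.eventuallyLE
    _ ≤ ∫ y in {y | z ^ 2 ≤ y ^ 2}, g y := by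
        refine setIntegral_mono_on hphi.integrableOn hg.integrableOn hT
          fun y (hy : z ^ 2 ≤ y ^ 2) => ?_
        simp only [stdPhi, g]
        gcongr
        rw [← exp_add]
        gcongr
        linarith
    _ ≤ ∫ y, g y := setIntegral_le_integral hg (.of_forall fun y => by positivity)
    _ = exp (-(z ^ 2 / 3)) * (sqrt (π / (1 / 6)) / sqrt (2 * π)) := by
        rw [integral_div, integral_const_mul, integral_gaussian, mul_div_assoc]
    _ ≤ 2 * exp (-(z ^ 2 / 3)) := by
        rw [mul_comm]
        gcongr
        rw [div_le_iff₀ (by positivity), sqrt_le_left (by positivity), mul_pow,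
          sq_sqrt (by positivity)]
        linarith [pi_pos]

lemma measurableSet_bulk (r lam eta : ℝ) : MeasurableSet (bulk r lam eta) :=
  measurableSet_Ioi.inter <| measurableSet_le
    (f := fun x => |stdDelta r lam x / Drl r lam|) (by unfold stdDelta; fun_prop) measurable_const

lemma stdDelta_div_Drl {r lam : ℝ} (h : 0 < r + 2 * lam) (x : ℝ) :
    stdDelta r lam x / Drl r lam = (x - (r + lam)) / (r + lam) :=
  div_div_div_cancel_right₀ (by positivity) _ _

lemma mul_lt_abs_sub_of_notMem_bulk {r lam eta x : ℝ} (hr : 0 < r) (hlam : 0 ≤ lam)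
    (hx0 : 0 < x) (hx : x ∉ bulk r lam eta) :
    eta * r ^ (-(1 : ℝ) / 3) * (r + lam) < |x - (r + lam)| := by
  have h : eta * r ^ (-(1 : ℝ) / 3) < |stdDelta r lam x / Drl r lam| :=
    not_le.1 fun h => hx ⟨hx0, h⟩
  rwa [stdDelta_div_Drl (by positivity), abs_div, abs_of_pos (by positivity : 0 < r + lam),
    lt_div_iff₀ (by positivity)] at h

lemma mul_Drl_lt_abs_stdDelta_of_notMem_bulk {r lam eta x : ℝ} (hr : 0 < r) (hlam : 0 ≤ lam)
    (hx0 : 0 < x) (hx : x ∉ bulk r lam eta) :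
    eta * r ^ (-(1 : ℝ) / 3) * Drl r lam < |stdDelta r lam x| := by
  have h : eta * r ^ (-(1 : ℝ) / 3) < |stdDelta r lam x / Drl r lam| :=
    not_le.1 fun h => hx ⟨hx0, h⟩
  have hD : 0 < Drl r lam := by unfold Drl; positivity
  rwa [abs_div, abs_of_pos hD, lt_div_iff₀ hD] at h

lemma div_four_le_Drl_sq {r lam : ℝ} (h : 0 < r + 2 * lam) : r / 4 ≤ Drl r lam ^ 2 := by
  rw [Drl, div_pow, sq_sqrt (by positivity), le_div_iff₀ (by positivity)]
  nlinarith [sq_nonneg r, sq_nonneg (r + 2 * lam)]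

lemma rpow_neg_one_third_sq_mul_self {r : ℝ} (hr : 0 < r) :
    (r ^ (-(1 : ℝ) / 3)) ^ 2 * r = r ^ ((1 : ℝ) / 3) := by
  rw [← rpow_natCast, ← rpow_mul hr.le, ← rpow_add_one hr.ne']
  norm_num

lemma rpow_neg_one_third_le_half {r : ℝ} (hr : 8 ≤ r) : r ^ (-(1 : ℝ) / 3) ≤ 1 / 2 := by
  calc r ^ (-(1 : ℝ) / 3) ≤ 8 ^ (-(1 : ℝ) / 3) :=
        rpow_le_rpow_of_nonpos (by norm_num) hr (by norm_num)
    _ = 1 / 2 := by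
      rw [show (8 : ℝ) = 2 ^ (3 : ℝ) by norm_num, ← rpow_mul zero_le_two]
      norm_num

/-- Large deviation bounds for the noncentral chi-square density and the standard
normal density outside the bulk `B_{r,λ}(1/2)`. -/
theorem chiSq_large_deviation_bounds (lam : ℝ) (hlam : 0 ≤ lam) :
    ∃ β > (0:ℝ), ∃ C > (0:ℝ), ∃ R > (0:ℝ), ∀ r ≥ R, ∀ a : ℝ,
      (∫ x in Set.Ici a ∩ (Set.Ioi 0 \ bulk r lam (1/2)), chiSqPDF r lam x)
        ≤ C * Real.exp (-β * r ^ ((1:ℝ)/3)) ∧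
      (∫ y in stdDelta r lam '' (Set.Ici a ∩ (Set.Ioi 0 \ bulk r lam (1/2))), stdPhi y)
        ≤ C * Real.exp (-β * r ^ ((1:ℝ)/3)) := by
  refine ⟨1 / 48, by norm_num, 2 * exp lam, by positivity, 8 * lam + 8, by positivity,
    fun r hr a => ?_⟩
  have hr0 : 0 < r := by linarith
  set ε := 1 / 2 * r ^ (-(1 : ℝ) / 3) with hεdef
  have hε : 0 ≤ ε := by positivity
  have hsmall : lam / r + ε / 2 ≤ 1 / 4 := by
    have : lam / r ≤ 1 / 8 := by rw [div_le_iff₀ hr0]; linarith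
    linarith [rpow_neg_one_third_le_half (by linarith : 8 ≤ r)]
  have hrate : 2 * exp (lam - ε ^ 2 * r / 12) =
      2 * exp lam * exp (-(1 / 48) * r ^ ((1 : ℝ) / 3)) := by
    rw [mul_assoc, ← exp_add, hεdef, mul_pow, mul_assoc, rpow_neg_one_third_sq_mul_self hr0]
    ring_nf
  rw [← hrate]
  constructor
  · exact setIntegral_chiSqPDF_le hr0 hlam hε hsmall
      (measurableSet_Ici.inter (measurableSet_Ioi.diff (measurableSet_bulk _ _ _)))
      (fun x hx => hx.2.1) fun x hx => mul_lt_abs_sub_of_notMem_bulk hr0 hlam hx.2.1 hx.2.2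
  · refine (setIntegral_stdPhi_le (z := ε * Drl r lam) ?_).trans ?_
    · rintro _ ⟨x, hx, rfl⟩
      exact sq_le_sq.2 <| (abs_of_nonneg (by unfold Drl; positivity)).trans_le
        (mul_Drl_lt_abs_stdDelta_of_notMem_bulk hr0 hlam hx.2.1 hx.2.2).le
    · gcongr
      nlinarith [div_four_le_Drl_sq (by linarith : 0 < r + 2 * lam), sq_nonneg ε]
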